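/- arXiv:1408.0646 — 9 statements merged into one kernel-verified Lean document; each statement's English description precedes it below -/
import Mathlib

section
/- Let F be a nonempty family of subsets of [n] and let p be the probability that a uniformly random maximal chain of 2^[n] meets F. Then there exists A ∈ F such that ℓ(F; [A,[n]]) ≥ ℓ(F)/p, where ℓ(F; I) denotes the expected number of times a uniformly random maximal chain of the interval I meets F. -/
/-!
For a maximal chain `σ` meeting `F`, let `A(σ)` be the first member of `F` on it. Whether `A` is
the first hit depends only on the part of the chain below `A`, so given `A(σ) = A` the rest of
the chain is a uniformly random maximal chain of `[A, [n]]`, which passes through a given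
`B ⊇ A` with probability `1 / C(n - |A|, |B| - |A|)`. As every chain through `B ∈ F` has exactly
one first hit, summing over `B ∈ F` gives `∑_σ ℓ(F; [A(σ), [n]]) = n! ℓ(F)`, the sum running over
the `p n!` chains meeting `F`. Some term is at least the average `ℓ(F) / p`.
-/

open Finset

/-- The initial segment of size `k` of the maximal chain corresponding to the
permutation `σ` of `[n]`. -/
def initSeg {n : ℕ} (σ : Equiv.Perm (Fin n)) (k : ℕ) : Finset (Fin n) :=
  Finset.univ.filter (fun i => (σ.symm i : ℕ) < k)

theorem Finset.exists_perm_fixing_image_eq {α : Type*} [Fintype α] [DecidableEq α]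
    {A D D' : Finset α} (hD : A ⊆ D) (hD' : A ⊆ D') (h : #D = #D') :
    ∃ π : Equiv.Perm α, (∀ x ∈ A, π x = x) ∧ D.image π = D' := by
  have hcard : #(D.subtype (· ∉ A)) = #(D'.subtype (· ∉ A)) := by
    rw [card_subtype, card_subtype, filter_notMem_eq_sdiff, filter_notMem_eq_sdiff,
      card_sdiff_of_subset hD, card_sdiff_of_subset hD', h]
  obtain ⟨ρ, hρ⟩ := (Set.powersetCard.isPretransitive (α := {x // x ∉ A})).exists_smul_eq
    ⟨D.subtype (· ∉ A), rfl⟩ ⟨D'.subtype (· ∉ A), hcard.symm⟩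
  have hρ' : (D.subtype (· ∉ A)).image ρ = D'.subtype (· ∉ A) := by
    simpa [Subtype.ext_iff, Finset.smul_finset_def] using hρ
  have hfix : ∀ x ∈ A, Equiv.Perm.ofSubtype ρ x = x := fun x hx =>
    Equiv.Perm.ofSubtype_apply_of_not_mem ρ (not_not_intro hx)
  refine ⟨Equiv.Perm.ofSubtype ρ, hfix, eq_of_subset_of_card_le ?_ ?_⟩
  · simp only [subset_iff, mem_image, forall_exists_index, and_imp, forall_apply_eq_imp_iff₂]
    intro x hx
    by_cases hxA : x ∈ A
    · rw [hfix x hxA]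
      exact hD' hxA
    · rw [Equiv.Perm.ofSubtype_apply_of_mem ρ hxA]
      have : ρ ⟨x, hxA⟩ ∈ D'.subtype (· ∉ A) :=
        hρ' ▸ mem_image_of_mem ρ (mem_subtype.2 hx)
      exact mem_subtype.1 this
  · rw [card_image_of_injective _ (Equiv.injective _), h]

section

variable {n : ℕ}

theorem initSeg_mono (σ : Equiv.Perm (Fin n)) {j k : ℕ} (h : j ≤ k) :
    initSeg σ j ⊆ initSeg σ k :=
  monotone_filter_right _ fun _ _ hi => lt_of_lt_of_le hi h

theorem initSeg_zero (σ : Equiv.Perm (Fin n)) : initSeg σ 0 = ∅ := by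
  simp [initSeg]

theorem card_initSeg (σ : Equiv.Perm (Fin n)) {k : ℕ} (hk : k ≤ n) : #(initSeg σ k) = k := by
  have : initSeg σ k = (univ.filter fun i : Fin n => (i : ℕ) < k).map σ.toEmbedding := by
    ext x
    simp [initSeg]
  rw [this, card_map, Fin.card_filter_val_lt, min_eq_right hk]

theorem initSeg_mul (π σ : Equiv.Perm (Fin n)) (k : ℕ) :
    initSeg (π * σ) k = (initSeg σ k).image π := by
  ext x
  unfold initSeg
  rw [mem_filter, mem_image]
  simp only [mem_filter, mem_univ, true_and, Equiv.Perm.mul_def, Equiv.symm_trans_apply]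
  exact ⟨fun h => ⟨π.symm x, h, π.apply_symm_apply x⟩, by rintro ⟨y, hy, rfl⟩; simpa⟩

theorem card_eq_choose_mul_card_filter_initSeg_eq {S : Finset (Equiv.Perm (Fin n))}
    {A B : Finset (Fin n)} (hAB : A ⊆ B) (hSA : ∀ σ ∈ S, initSeg σ #A = A)
    (hS : ∀ σ ∈ S, ∀ π : Equiv.Perm (Fin n), (∀ x ∈ A, π x = x) → π * σ ∈ S) :
    #S = (n - #A).choose (#B - #A) * #{σ ∈ S | initSeg σ #B = B} := by
  have hmaps : ∀ σ ∈ S, initSeg σ #B ∈ (univ.powersetCard #B).filter (A ⊆ ·) := by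
    intro σ hσ
    rw [mem_filter, mem_powersetCard_univ, card_initSeg σ (card_finset_fin_le B), ← hSA σ hσ]
    exact ⟨rfl, initSeg_mono σ (card_le_card hAB)⟩
  have hfiber : ∀ D ∈ (univ.powersetCard #B).filter (A ⊆ ·),
      #{σ ∈ S | initSeg σ #B = D} = #{σ ∈ S | initSeg σ #B = B} := by
    intro D hD
    -- a permutation fixing `A` pointwise and carrying `D` to `B` moves one fibre onto the other
    rw [mem_filter, mem_powersetCard_univ] at hD
    obtain ⟨π, hπA, hπD⟩ := exists_perm_fixing_image_eq hD.2 hAB hD.1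
    have hπA' : ∀ x ∈ A, π⁻¹ x = x := fun x hx => by
      rw [Equiv.Perm.inv_eq_iff_eq, hπA x hx]
    refine card_nbij' (π * ·) (π⁻¹ * ·) ?_ ?_ (fun σ _ => inv_mul_cancel_left π σ)
      (fun σ _ => mul_inv_cancel_left π σ)
    · intro σ hσ
      rw [coe_filter] at hσ ⊢
      refine ⟨hS σ hσ.1 π hπA, ?_⟩
      rw [initSeg_mul, hσ.2, hπD]
    · intro σ hσ
      rw [coe_filter] at hσ ⊢
      refine ⟨hS σ hσ.1 π⁻¹ hπA', ?_⟩
      rw [initSeg_mul, hσ.2, ← hπD, image_image]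
      simp
  rw [card_eq_sum_card_fiberwise hmaps, sum_congr rfl hfiber, sum_const, smul_eq_mul,
    card_filter_powersetCard_subset _ _ _ (subset_univ A) (card_le_card hAB), card_univ,
    Fintype.card_fin]

theorem choose_mul_card_initSeg_eq (B : Finset (Fin n)) :
    n.choose #B * #{σ : Equiv.Perm (Fin n) | initSeg σ #B = B} = n.factorial := by
  have := card_eq_choose_mul_card_filter_initSeg_eq (S := univ) (empty_subset B)
    (fun σ _ => initSeg_zero σ) (fun _ _ _ _ => mem_univ _)
  simpa [Fintype.card_perm] using this.symm

theorem exists_initSeg_eq (A : Finset (Fin n)) :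
    ∃ σ : Equiv.Perm (Fin n), initSeg σ #A = A := by
  obtain ⟨π, -, hπ⟩ := exists_perm_fixing_image_eq (empty_subset _) (empty_subset A)
    (card_initSeg 1 (card_finset_fin_le A))
  exact ⟨π, by rw [← mul_one π, initSeg_mul, hπ]⟩

def IsFirstHit (F : Finset (Finset (Fin n))) (σ : Equiv.Perm (Fin n)) (A : Finset (Fin n)) :
    Prop :=
  initSeg σ #A = A ∧ ∀ j < #A, initSeg σ j ∉ F

instance (F : Finset (Finset (Fin n))) (σ : Equiv.Perm (Fin n)) (A : Finset (Fin n)) :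
    Decidable (IsFirstHit F σ A) :=
  inferInstanceAs (Decidable (_ ∧ _))

variable {F : Finset (Finset (Fin n))} {σ : Equiv.Perm (Fin n)} {A B : Finset (Fin n)}

theorem IsFirstHit.card_le (h : IsFirstHit F σ A) (hB : B ∈ F) (hσB : initSeg σ #B = B) :
    #A ≤ #B :=
  not_lt.1 fun hlt => h.2 _ hlt (by rwa [hσB])

theorem IsFirstHit.subset (h : IsFirstHit F σ A) (hB : B ∈ F) (hσB : initSeg σ #B = B) :
    A ⊆ B := by
  rw [← h.1, ← hσB]
  exact initSeg_mono σ (h.card_le hB hσB)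

theorem IsFirstHit.unique (hA : A ∈ F) (hB : B ∈ F) (h : IsFirstHit F σ A)
    (h' : IsFirstHit F σ B) : A = B :=
  (h.subset hB h'.1).antisymm (h'.subset hA h.1)

theorem exists_isFirstHit (hB : B ∈ F) (hσB : initSeg σ #B = B) :
    ∃ A ∈ F, IsFirstHit F σ A := by
  classical
  have hex : ∃ k, initSeg σ k ∈ F := ⟨#B, by rwa [hσB]⟩
  have hk : Nat.find hex ≤ n := (Nat.find_min' hex (by rwa [hσB])).trans (card_finset_fin_le B)
  refine ⟨initSeg σ (Nat.find hex), Nat.find_spec hex, ?_⟩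
  rw [IsFirstHit, card_initSeg σ hk]
  exact ⟨rfl, fun j hj => Nat.find_min hex hj⟩

theorem IsFirstHit.mul (h : IsFirstHit F σ A) {π : Equiv.Perm (Fin n)}
    (hπ : ∀ x ∈ A, π x = x) :
    IsFirstHit F (π * σ) A := by
  have hfix : ∀ j ≤ #A, initSeg (π * σ) j = initSeg σ j := fun j hj => by
    rw [initSeg_mul]
    exact (image_congr fun x hx => hπ x (h.1 ▸ initSeg_mono σ hj hx)).trans image_id
  exact ⟨(hfix _ le_rfl).trans h.1, fun j hj => hfix j hj.le ▸ h.2 j hj⟩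

theorem card_eq_sum_card_isFirstHit {T : Finset (Equiv.Perm (Fin n))}
    (hT : ∀ σ ∈ T, ∃ B ∈ F, initSeg σ #B = B) :
    #T = ∑ A ∈ F, #{σ ∈ T | IsFirstHit F σ A} := by
  simp only [card_filter]
  rw [sum_comm, card_eq_sum_ones]
  refine sum_congr rfl fun σ hσ => ?_
  obtain ⟨B, hB, hσB⟩ := hT σ hσ
  obtain ⟨A, hA, hfirst⟩ := exists_isFirstHit hB hσB
  rw [← card_filter, eq_comm, card_eq_one]
  refine ⟨A, eq_singleton_iff_unique_mem.2 ⟨mem_filter.2 ⟨hA, hfirst⟩, fun A' hA' => ?_⟩⟩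
  rw [mem_filter] at hA'
  exact IsFirstHit.unique hA'.1 hA hA'.2 hfirst

theorem card_isFirstHit_eq (hAB : A ⊆ B) :
    #{σ | IsFirstHit F σ A} =
      (n - #A).choose (#B - #A) * #{σ | initSeg σ #B = B ∧ IsFirstHit F σ A} := by
  rw [card_eq_choose_mul_card_filter_initSeg_eq hAB (fun σ hσ => (mem_filter.1 hσ).2.1)
    (fun σ hσ π hπ => mem_filter.2 ⟨mem_univ _, (mem_filter.1 hσ).2.mul hπ⟩), filter_filter]
  simp only [and_comm]

/-- The Lubell function `ℓ(F)`. -/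
noncomputable def lubell (F : Finset (Finset (Fin n))) : ℝ :=
  ∑ A ∈ F, (1 : ℝ) / (n.choose A.card)

/-- `ℓ(F; [A, [n]])`. -/
noncomputable def upLubell (F : Finset (Finset (Fin n))) (A : Finset (Fin n)) : ℝ :=
  ∑ B ∈ F.filter (fun B => A ⊆ B), (1 : ℝ) / ((n - A.card).choose (B.card - A.card))

theorem card_isFirstHit_mul_upLubell :
    (#{σ | IsFirstHit F σ A} : ℝ) * upLubell F A =
      ∑ B ∈ F with A ⊆ B, (#{σ | initSeg σ #B = B ∧ IsFirstHit F σ A} : ℝ) := by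
  rw [upLubell, mul_sum]
  refine sum_congr rfl fun B hB => ?_
  have hAB := (mem_filter.1 hB).2
  have hchoose : ((n - #A).choose (#B - #A) : ℝ) ≠ 0 := by
    have := card_finset_fin_le B
    exact_mod_cast (Nat.choose_pos (by have := card_le_card hAB; omega)).ne'
  rw [card_isFirstHit_eq hAB, Nat.cast_mul]
  field_simp

theorem sum_card_initSeg_and_isFirstHit (hB : B ∈ F) :
    ∑ A ∈ F with A ⊆ B, #{σ | initSeg σ #B = B ∧ IsFirstHit F σ A} =
      #{σ : Equiv.Perm (Fin n) | initSeg σ #B = B} := by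
  rw [card_eq_sum_card_isFirstHit fun σ hσ => ⟨B, hB, (mem_filter.1 hσ).2⟩]
  simp only [filter_filter]
  refine sum_filter_of_ne fun A _ hne => ?_
  obtain ⟨σ, hσ⟩ := card_ne_zero.1 hne
  obtain ⟨hσB, hfirst⟩ := (mem_filter.1 hσ).2
  exact hfirst.subset hB hσB

theorem sum_card_isFirstHit_mul_upLubell :
    ∑ A ∈ F, (#{σ | IsFirstHit F σ A} : ℝ) * upLubell F A = n.factorial * lubell F := by
  simp_rw [card_isFirstHit_mul_upLubell]
  rw [sum_comm' (t' := F) (s' := fun B => F.filter (· ⊆ B)) (by simp; tauto), lubell, mul_sum]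
  refine sum_congr rfl fun B hB => ?_
  have hchoose : (n.choose #B : ℝ) ≠ 0 := by
    exact_mod_cast (Nat.choose_pos (card_finset_fin_le B)).ne'
  rw [← Nat.cast_sum, sum_card_initSeg_and_isFirstHit hB, ← choose_mul_card_initSeg_eq B,
    Nat.cast_mul]
  field_simp

theorem card_hitting_eq_sum_card_isFirstHit :
    #{σ : Equiv.Perm (Fin n) | ∃ A ∈ F, initSeg σ #A = A} =
      ∑ A ∈ F, #{σ | IsFirstHit F σ A} := by
  rw [card_eq_sum_card_isFirstHit fun σ hσ => (mem_filter.1 hσ).2]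
  refine sum_congr rfl fun A hA => ?_
  rw [filter_filter]
  exact congrArg card <| filter_congr fun σ _ => ⟨And.right, fun h => ⟨⟨A, hA, h.1⟩, h⟩⟩

end

/-- Let `F` be a nonempty family of subsets of `[n]` and let `p` be the probability
that a uniformly random maximal chain of `2^[n]` meets `F`.  Then some `A ∈ F`
satisfies `ℓ(F; [A,[n]]) ≥ ℓ(F)/p`, where
`ℓ(F;[A,[n]]) = Σ_{B∈F, A⊆B} 1/C(n-|A|, |B|-|A|)`. -/
theorem exists_up_lubell_ge (n : ℕ) (F : Finset (Finset (Fin n))) (hF : F.Nonempty)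
    (p : ℝ)
    (hp : p = ((Finset.univ.filter
        (fun σ : Equiv.Perm (Fin n) => ∃ A ∈ F, initSeg σ A.card = A)).card : ℝ)
        / (Nat.factorial n)) :
    ∃ A ∈ F,
      (∑ B ∈ F.filter (fun B => A ⊆ B), (1 : ℝ) / ((n - A.card).choose (B.card - A.card)))
        ≥ (∑ A ∈ F, (1 : ℝ) / (n.choose A.card)) / p := by
  set w : Finset (Fin n) → ℝ := fun A => #{σ | IsFirstHit F σ A}
  have hw : ∑ A ∈ F, w A = #{σ : Equiv.Perm (Fin n) | ∃ A ∈ F, initSeg σ #A = A} := by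
    simp only [w, card_hitting_eq_sum_card_isFirstHit, Nat.cast_sum]
  have hpos : 0 < ∑ A ∈ F, w A := by
    obtain ⟨A₀, hA₀⟩ := hF
    obtain ⟨σ, hσ⟩ := exists_initSeg_eq A₀
    rw [hw, Nat.cast_pos]
    exact card_pos.2 ⟨σ, mem_filter.2 ⟨mem_univ _, A₀, hA₀, hσ⟩⟩
  have hmean : F.centerMass w (upLubell F) = lubell F / p := by
    rw [centerMass, smul_eq_mul]
    simp_rw [smul_eq_mul]
    rw [sum_card_isFirstHit_mul_upLubell, hw, hp]
    have : (n.factorial : ℝ) ≠ 0 := by positivity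
    field_simp
  obtain ⟨A, hA, hmax⟩ := exists_mem_eq_sup' hF (upLubell F)
  refine ⟨A, hA, ?_⟩
  calc lubell F / p = F.centerMass w (upLubell F) := hmean.symm
    _ ≤ F.sup' hF (upLubell F) := centerMass_le_sup (fun _ _ => Nat.cast_nonneg _) hpos
    _ = upLubell F A := hmax
end

section
/- Let 0 ≤ γ < 1 and 0 ≤ δ < 1, and let F be a family of subsets of [n] with |A| ≤ δn for all A ∈ F. If no set in F is γ-flexible, then ℓ(F) < 1 + (1/(1-γ))·ln(1/(1-δ)). -/
open Finset

/-- The set of pivots of `A` with respect to the family `F`: elements `i ∈ A` such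
that `(A \ {i}) ∪ {j} ∈ F` for some `j ∉ A`. -/
def pivots {n : ℕ} (F : Finset (Finset (Fin n))) (A : Finset (Fin n)) : Finset (Fin n) :=
  A.filter (fun i => ∃ j, j ∉ A ∧ insert j (A.erase i) ∈ F)

/-- `A` is `γ`-flexible with respect to `F` if it has at least `γ|A|` pivots. -/
def Flexible {n : ℕ} (F : Finset (Finset (Fin n))) (γ : ℝ) (A : Finset (Fin n)) : Prop :=
  γ * A.card ≤ (pivots F A).card

/-!
If `A \ {i} = B \ {j}` for members `A ≠ B` of `F`, then `B = (A \ {i}) ∪ {j}` with `j ∉ A`, so `i`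
is a pivot of `A`. Hence removing a non-pivot is injective, and the members of `F` of size `k + 1`
have at most `C(n, k)` non-pivots in total. A set that is not `γ`-flexible has more than
`(1 - γ)(k + 1)` non-pivots, so by `(k + 1) C(n, k + 1) = (n - k) C(n, k)` level `k + 1` contributes
at most `1 / ((1 - γ)(n - k))` to `ℓ(F)`; level `0` is empty because `∅` is always flexible.
Summing over `k + 1 ≤ δn` gives `1/(1-γ)` times the harmonic tail `∑ 1/(n-k)`, which is at most
`ln(1/(1-δ))`.
-/

section Pivots

variable {n : ℕ} (F : Finset (Finset (Fin n)))

lemma injOn_erase_nonpivots :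
    Set.InjOn (fun p : (_ : Finset (Fin n)) × Fin n => p.1.erase p.2)
      (F.sigma fun A => A \ pivots F A) := by
  rintro ⟨A, i⟩ hAi ⟨B, j⟩ hBj (hAB : A.erase i = B.erase j)
  simp only [coe_sigma, Set.mem_sigma_iff, mem_coe, mem_sdiff] at hAi hBj
  obtain ⟨hA, hiA, hi⟩ := hAi
  obtain ⟨hB, hjB, -⟩ := hBj
  by_cases hij : i = j
  · subst hij
    obtain rfl : A = B := by rw [← insert_erase hiA, hAB, insert_erase hjB]
    rfl
  · have hjA : j ∉ A := fun hjA => by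
      have : j ∈ A.erase i := mem_erase.2 ⟨Ne.symm hij, hjA⟩
      simp [hAB] at this
    exact absurd (mem_filter.2 ⟨hiA, j, hjA, by rwa [hAB, insert_erase hjB]⟩) hi

lemma sum_card_sdiff_pivots_le_choose (k : ℕ) :
    ∑ A ∈ F with A.card = k + 1, (A \ pivots F A).card ≤ n.choose k := by
  rw [← card_sigma]
  calc _ ≤ (powersetCard k (univ : Finset (Fin n))).card := by
        refine card_le_card_of_injOn _ ?_ ((injOn_erase_nonpivots F).mono ?_)
        · rintro ⟨A, i⟩ hAi
          simp only [coe_sigma, Set.mem_sigma_iff, mem_coe, mem_filter, mem_sdiff] at hAi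
          simp [card_erase_of_mem hAi.2.1, hAi.1.2]
        · exact sigma_mono (filter_subset _ _) fun _ => subset_rfl
    _ = n.choose k := by simp

lemma mul_card_lt_card_sdiff_pivots {γ : ℝ} {A : Finset (Fin n)} (hA : ¬ Flexible F γ A) :
    (1 - γ) * A.card < (A \ pivots F A).card := by
  rw [Flexible, not_le] at hA
  have hsub : pivots F A ⊆ A := filter_subset _ _
  rw [card_sdiff_of_subset hsub, Nat.cast_sub (card_le_card hsub)]
  linarith

lemma sum_level_inv_choose_le {γ : ℝ} (hγ : γ < 1) (hF : ∀ A ∈ F, ¬ Flexible F γ A)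
    {k : ℕ} (hk : k < n) :
    ∑ A ∈ F with A.card = k + 1, (1 : ℝ) / n.choose A.card ≤ 1 / ((1 - γ) * (n - k)) := by
  set L := F.filter (·.card = k + 1)
  have hcount : (1 - γ) * (k + 1) * L.card ≤ n.choose k :=
    calc (1 - γ) * (k + 1) * L.card = ∑ A ∈ L, (1 - γ) * (A.card : ℝ) := by
          rw [sum_congr rfl fun A hA => by rw [(mem_filter.1 hA).2], sum_const, nsmul_eq_mul]
          push_cast; ring
      _ ≤ ∑ A ∈ L, ((A \ pivots F A).card : ℝ) :=
          sum_le_sum fun A hA => (mul_card_lt_card_sdiff_pivots F (hF A (mem_filter.1 hA).1)).le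
      _ ≤ n.choose k := by exact_mod_cast sum_card_sdiff_pivots_le_choose F k
  have hpascal : (n.choose (k + 1) : ℝ) * (k + 1) = n.choose k * (n - k) := by
    rw [← Nat.cast_sub hk.le]; exact_mod_cast Nat.choose_succ_right_eq n k
  have hchoose : (0 : ℝ) < n.choose (k + 1) := by exact_mod_cast Nat.choose_pos hk
  have hnk : (0 : ℝ) < n - k := by rw [sub_pos]; exact_mod_cast hk
  have hγ' : 0 < 1 - γ := by linarith
  rw [sum_congr rfl fun A hA => by rw [(mem_filter.1 hA).2], sum_const, nsmul_eq_mul,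
    mul_one_div, div_le_div_iff₀ hchoose (by positivity), one_mul]
  refine le_of_mul_le_mul_right ?_ (by positivity : (0 : ℝ) < k + 1)
  rw [hpascal]
  nlinarith

end Pivots

lemma sum_eq_sum_range_sum_card_eq_succ {α M : Type*} [AddCommMonoid M]
    {F : Finset (Finset α)} (f : Finset α → M) {K : ℕ} (hempty : ∅ ∉ F)
    (hF : ∀ A ∈ F, A.card ≤ K) :
    ∑ A ∈ F, f A = ∑ k ∈ range K, ∑ A ∈ F with A.card = k + 1, f A := by
  rw [← sum_fiberwise_of_maps_to (g := card) (t := range (K + 1))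
    fun A hA => mem_range.2 (Nat.lt_succ_of_le (hF A hA)), sum_range_succ']
  have hlevel0 : F.filter (·.card = 0) = ∅ :=
    filter_eq_empty_iff.2 fun A hA h => hempty (card_eq_zero.1 h ▸ hA)
  rw [hlevel0, sum_empty, add_zero]

lemma Real.inv_le_log_sub_log_sub_one {t : ℝ} (ht : 1 < t) :
    t⁻¹ ≤ Real.log t - Real.log (t - 1) := by
  have h := Real.one_sub_inv_le_log_of_pos (by positivity : 0 < t / (t - 1))
  rw [Real.log_div (by positivity) (by linarith), inv_div] at h
  have : 1 - (t - 1) / t = t⁻¹ := by field_simp; ring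
  linarith

lemma sum_range_one_div_sub_le_log_sub {x : ℝ} :
    ∀ {K : ℕ}, (K : ℝ) < x → ∑ k ∈ range K, 1 / (x - k) ≤ Real.log x - Real.log (x - K)
  | 0, _ => by simp
  | K + 1, hK => by
    push_cast at hK
    have ih := sum_range_one_div_sub_le_log_sub (K := K) (by linarith)
    have step := Real.inv_le_log_sub_log_sub_one (t := x - K) (by linarith)
    rw [sub_sub] at step
    rw [sum_range_succ, one_div]
    push_cast
    linarith

lemma sum_range_floor_one_div_sub_le_log {δ : ℝ} (hδ0 : 0 ≤ δ) (hδ1 : δ < 1) (n : ℕ) :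
    ∑ k ∈ range ⌊δ * n⌋₊, 1 / ((n : ℝ) - k) ≤ Real.log (1 / (1 - δ)) := by
  have hlog : 0 ≤ Real.log (1 / (1 - δ)) :=
    Real.log_nonneg (by rw [le_div_iff₀ (by linarith)]; linarith)
  rcases n.eq_zero_or_pos with rfl | hn
  · simpa using hlog
  have hn' : (0 : ℝ) < n := by exact_mod_cast hn
  have hfloor : (⌊δ * n⌋₊ : ℝ) ≤ δ * n := Nat.floor_le (by positivity)
  have hgap : 0 < (n : ℝ) - ⌊δ * n⌋₊ := by nlinarith
  refine (sum_range_one_div_sub_le_log_sub (by linarith)).trans ?_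
  rw [← Real.log_div hn'.ne' hgap.ne']
  refine Real.log_le_log (by positivity) ?_
  rw [div_le_div_iff₀ hgap (by linarith)]
  nlinarith

theorem lubell_lt_of_no_flexible_general (n : ℕ) (F : Finset (Finset (Fin n))) (γ δ : ℝ)
    (hγ1 : γ < 1) (hδ0 : 0 ≤ δ) (hδ1 : δ < 1)
    (hsize : ∀ A ∈ F, (A.card : ℝ) ≤ δ * n)
    (hflex : ∀ A ∈ F, ¬ Flexible F γ A) :
    (∑ A ∈ F, (1 : ℝ) / (n.choose A.card)) < 1 + (1 / (1 - γ)) * Real.log (1 / (1 - δ)) := by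
  set K := ⌊δ * n⌋₊
  have hempty : ∅ ∉ F := fun h => hflex ∅ h (by simp [Flexible])
  have hKn : K ≤ n := Nat.floor_le_of_le (by nlinarith [(n.cast_nonneg : (0 : ℝ) ≤ n)])
  have hγ' : 0 ≤ 1 / (1 - γ) := by rw [one_div_nonneg]; linarith
  calc ∑ A ∈ F, (1 : ℝ) / (n.choose A.card)
      = ∑ k ∈ range K, ∑ A ∈ F with A.card = k + 1, (1 : ℝ) / n.choose A.card :=
        sum_eq_sum_range_sum_card_eq_succ _ hempty fun A hA => Nat.le_floor (hsize A hA)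
    _ ≤ ∑ k ∈ range K, 1 / ((1 - γ) * (n - k)) := sum_le_sum fun k hk =>
        sum_level_inv_choose_le F hγ1 hflex ((mem_range.1 hk).trans_le hKn)
    _ = 1 / (1 - γ) * ∑ k ∈ range K, 1 / ((n : ℝ) - k) := by
        simp only [mul_sum, one_div_mul_one_div]
    _ ≤ 1 / (1 - γ) * Real.log (1 / (1 - δ)) :=
        mul_le_mul_of_nonneg_left (sum_range_floor_one_div_sub_le_log hδ0 hδ1 n) hγ'
    _ < _ := lt_one_add _

/-- If `0 ≤ γ < 1`, `0 ≤ δ < 1`, every member of `F` has size at most `δn`, and no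
member of `F` is `γ`-flexible, then `ℓ(F) < 1 + (1/(1-γ))·ln(1/(1-δ))`. -/
theorem lubell_lt_of_no_flexible (n : ℕ) (F : Finset (Finset (Fin n))) (γ δ : ℝ)
    (hγ0 : 0 ≤ γ) (hγ1 : γ < 1) (hδ0 : 0 ≤ δ) (hδ1 : δ < 1)
    (hsize : ∀ A ∈ F, (A.card : ℝ) ≤ δ * n)
    (hflex : ∀ A ∈ F, ¬ Flexible F γ A) :
    (∑ A ∈ F, (1 : ℝ) / (n.choose A.card)) < 1 + (1 / (1 - γ)) * Real.log (1 / (1 - δ)) :=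
  lubell_lt_of_no_flexible_general n F γ δ hγ1 hδ0 hδ1 hsize hflex
end

section
/- For a family F of subsets of [n] with no γ-flexible set, each level L_k = F ∩ C([n],k) satisfies |L_k|·(1-γ)k ≤ C(n,k-1) for k ≥ 1. -/
open Finset

/-!
Call an element of `A ∈ F` that is not a pivot a non-pivot. A non-pivot `i` of `A` can be
recovered from the shadow `A \ {i}`: any other way of writing that shadow as `A' \ {i'}` with
`A' ∈ F` would exhibit `i` as a pivot of `A`. So the pairs `(A, i)` with `A ∈ L_k` and `i` a
non-pivot of `A` inject into `C([n], k-1)`, while each `A ∈ L_k` that is not `γ`-flexible has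
more than `(1-γ)k` non-pivots.
-/

namespace LevelBound

variable {n : ℕ} {F : Finset (Finset (Fin n))}

def nonPivots (F : Finset (Finset (Fin n))) (A : Finset (Fin n)) : Finset (Fin n) :=
  A \ pivots F A

lemma pivots_subset (A : Finset (Fin n)) : pivots F A ⊆ A :=
  filter_subset _ _

lemma mem_of_mem_nonPivots {A : Finset (Fin n)} {i : Fin n} (hi : i ∈ nonPivots F A) : i ∈ A :=
  (mem_sdiff.mp hi).1

lemma card_nonPivots (A : Finset (Fin n)) :
    (nonPivots F A).card = A.card - (pivots F A).card :=
  card_sdiff_of_subset (pivots_subset A)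

lemma one_sub_mul_card_le_card_nonPivots {γ : ℝ} {A : Finset (Fin n)} (hA : ¬ Flexible F γ A) :
    (1 - γ) * A.card ≤ (nonPivots F A).card := by
  rw [Flexible, not_le] at hA
  rw [card_nonPivots, Nat.cast_sub (card_le_card (pivots_subset A))]
  linarith

lemma eq_and_eq_of_erase_eq {A A' : Finset (Fin n)} {i i' : Fin n} (hA' : A' ∈ F)
    (hi : i ∈ nonPivots F A) (hi' : i' ∈ A') (h : A.erase i = A'.erase i') :
    A = A' ∧ i = i' := by
  have hiA := mem_of_mem_nonPivots hi
  by_cases hii' : i = i'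
  · subst hii'
    exact ⟨by rw [← insert_erase hiA, h, insert_erase hi'], rfl⟩
  exfalso
  have hi'A : i' ∉ A := fun hi'A => by
    have : i' ∈ A'.erase i' := h ▸ mem_erase.mpr ⟨Ne.symm hii', hi'A⟩
    exact (mem_erase.mp this).1 rfl
  have hpivot : i ∈ pivots F A :=
    mem_filter.mpr ⟨hiA, i', hi'A, by rwa [h, insert_erase hi']⟩
  exact (mem_sdiff.mp hi).2 hpivot

lemma sum_card_nonPivots_le_choose (k : ℕ) :
    ∑ A ∈ F.filter (fun A => A.card = k), (nonPivots F A).card ≤ n.choose (k - 1) := by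
  have hchoose : (powersetCard (k - 1) (univ : Finset (Fin n))).card = n.choose (k - 1) := by
    rw [card_powersetCard, card_univ, Fintype.card_fin]
  rw [← card_sigma, ← hchoose]
  refine card_le_card_of_injOn (fun p => p.1.erase p.2) ?_ ?_
  · rintro ⟨A, i⟩ hp
    obtain ⟨hA, hi⟩ := mem_sigma.mp hp
    rw [mem_coe, mem_powersetCard, card_erase_of_mem (mem_of_mem_nonPivots hi),
      (mem_filter.mp hA).2]
    exact ⟨subset_univ _, rfl⟩
  · rintro ⟨A, i⟩ hp ⟨A', i'⟩ hp' h
    obtain ⟨-, hi⟩ := mem_sigma.mp hp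
    obtain ⟨hA', hi'⟩ := mem_sigma.mp hp'
    obtain ⟨rfl, rfl⟩ :=
      eq_and_eq_of_erase_eq (mem_filter.mp hA').1 hi (mem_of_mem_nonPivots hi') h
    rfl

end LevelBound

open LevelBound in
theorem level_card_bound_of_no_flexible_general (n : ℕ) (F : Finset (Finset (Fin n))) (γ : ℝ)
    (hflex : ∀ A ∈ F, ¬ Flexible F γ A) (k : ℕ) :
    ((F.filter (fun A => A.card = k)).card : ℝ) * ((1 - γ) * k) ≤ n.choose (k - 1) := by
  have hlevel : ∀ A ∈ F.filter (fun A => A.card = k), (1 - γ) * k ≤ (nonPivots F A).card := by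
    intro A hA
    obtain ⟨hAF, rfl⟩ := mem_filter.mp hA
    exact one_sub_mul_card_le_card_nonPivots (hflex A hAF)
  calc ((F.filter (fun A => A.card = k)).card : ℝ) * ((1 - γ) * k)
      = ∑ _A ∈ F.filter (fun A => A.card = k), (1 - γ) * k := by
        rw [sum_const, nsmul_eq_mul]
    _ ≤ ∑ A ∈ F.filter (fun A => A.card = k), ((nonPivots F A).card : ℝ) := sum_le_sum hlevel
    _ ≤ n.choose (k - 1) := by exact_mod_cast sum_card_nonPivots_le_choose k

/-- If `F` has no `γ`-flexible member, then each level `L_k = F ∩ C([n],k)` satisfies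
`|L_k|·(1-γ)·k ≤ C(n,k-1)` for `k ≥ 1`. -/
theorem level_card_bound_of_no_flexible (n : ℕ) (F : Finset (Finset (Fin n))) (γ : ℝ)
    (hflex : ∀ A ∈ F, ¬ Flexible F γ A) (k : ℕ) (hk : 1 ≤ k) :
    ((F.filter (fun A => A.card = k)).card : ℝ) * ((1 - γ) * k) ≤ n.choose (k - 1) :=
  level_card_bound_of_no_flexible_general n F γ hflex k
end

section
/- Let F be a family of subsets of [n], T ⊆ [n] with |T| = t, and let F' = {A ∩ T : A ∈ F} be the projection of F onto T. Then Σ_{B∈F'} 1/C(t,|B|) ≥ ((t+1)/(n+1))·Σ_{A∈F} 1/C(n,|A|). -/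
/-!
Group `F` by traces. The sets `A ⊆ [n]` with `A ∩ T = B` are the sets `B ∪ C` with `C ⊆ [n] \ T`,
and their total Lubell mass in `2^[n]` is
`∑ⱼ C(n - t, j) / C(n, |B| + j) = (n + 1) / ((t + 1) C(t, |B|))`,
an identity proved by induction on `n - t` from the reciprocal Pascal rule
`1 / C(N + 1, m) + 1 / C(N + 1, m + 1) = (N + 2) / ((N + 1) C(N, m))`.
Hence the fibre of `F` over each `B ∈ F'` carries at most `(n + 1) / (t + 1)` times the mass
`1 / C(t, |B|)` of `B` in `2^T`.
-/

open Finset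

lemma one_div_choose_succ_add_one_div_choose_succ_succ {N m : ℕ} (hm : m ≤ N) :
    (1 : ℝ) / (N + 1).choose m + 1 / (N + 1).choose (m + 1)
      = ((N : ℝ) + 2) / (N + 1) / N.choose m := by
  -- the two reciprocals are `(N + 1 - m)` and `(m + 1)` over `(N + 1) C(N, m)`
  have h₁ : ((N + 1).choose m : ℝ) * (N + 1 - m : ℕ) = N.choose m * (N + 1) := by
    exact_mod_cast (Nat.choose_mul_succ_eq N m).symm
  have h₂ : ((N + 1).choose (m + 1) : ℝ) * (m + 1) = (N + 1) * N.choose m := by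
    exact_mod_cast (Nat.add_one_mul_choose_eq N m).symm
  have : (N.choose m : ℝ) ≠ 0 := by exact_mod_cast (Nat.choose_pos hm).ne'
  have : ((N + 1).choose m : ℝ) ≠ 0 := by exact_mod_cast (Nat.choose_pos (by omega)).ne'
  have : ((N + 1).choose (m + 1) : ℝ) ≠ 0 := by exact_mod_cast (Nat.choose_pos (by omega)).ne'
  rw [Nat.cast_sub (by omega)] at h₁
  push_cast at h₁
  field_simp
  linear_combination -((N + 1).choose (m + 1) : ℝ) * h₁ - ((N + 1).choose m : ℝ) * h₂

lemma sum_choose_div_choose_add {t k : ℕ} (hk : k ≤ t) (d : ℕ) :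
    ∑ j ∈ range (d + 1), (d.choose j : ℝ) / (t + d).choose (k + j)
      = ((t : ℝ) + d + 1) / (t + 1) / t.choose k := by
  induction d with
  | zero => simp [div_self (by positivity : (t : ℝ) + 1 ≠ 0)]
  | succ d ih =>
    have pascal :=
      sum_choose_succ_mul (R := ℝ) (fun j _ => 1 / ((t + (d + 1)).choose (k + j) : ℝ)) d
    simp only [← div_eq_mul_one_div] at pascal
    rw [pascal, ← sum_add_distrib]
    calc ∑ j ∈ range (d + 1), ((d.choose j : ℝ) / (t + (d + 1)).choose (k + j)
            + (d.choose j : ℝ) / (t + (d + 1)).choose (k + (j + 1)))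
        = ∑ j ∈ range (d + 1), ((t : ℝ) + d + 2) / (t + d + 1) *
            ((d.choose j : ℝ) / (t + d).choose (k + j)) := by
          refine sum_congr rfl fun j hj => ?_
          have hj : k + j ≤ t + d := by have := mem_range.mp hj; omega
          rw [div_eq_mul_one_div, div_eq_mul_one_div (d.choose j : ℝ), ← mul_add,
            ← add_assoc t d 1, ← add_assoc k j 1,
            one_div_choose_succ_add_one_div_choose_succ_succ hj]
          push_cast
          ring
      _ = ((t : ℝ) + (d + 1 : ℕ) + 1) / (t + 1) / t.choose k := by
          rw [← mul_sum, ih]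
          have : (t : ℝ) + d + 1 ≠ 0 := by positivity
          push_cast
          field_simp
          ring

section Trace

variable {α : Type*} [Fintype α] [DecidableEq α]

lemma filter_inter_eq_eq_image_union {T B : Finset α} (hB : B ⊆ T) :
    ({A | A ∩ T = B} : Finset (Finset α)) = Tᶜ.powerset.image (B ∪ ·) := by
  ext A
  simp only [mem_filter, mem_univ, true_and, mem_image, mem_powerset, subset_iff, mem_compl]
  constructor
  · rintro rfl
    exact ⟨A \ T, by grind, by grind⟩
  · rintro ⟨C, hC, rfl⟩
    grind

lemma sum_card_filter_inter_eq {M : Type*} [AddCommMonoid M] (f : ℕ → M) {T B : Finset α}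
    (hB : B ⊆ T) :
    ∑ A with A ∩ T = B, f #A
      = ∑ j ∈ range (#Tᶜ + 1), (#Tᶜ).choose j • f (#B + j) := by
  have hdisj : ∀ C ∈ Tᶜ.powerset, Disjoint B C := fun C hC =>
    disjoint_of_subset_left hB (disjoint_compl_right.mono_right (mem_powerset.mp hC))
  rw [filter_inter_eq_eq_image_union hB, sum_image,
    ← sum_powerset_apply_card (fun m => f (#B + m))]
  · exact sum_congr rfl fun C hC => by rw [card_union_of_disjoint (hdisj C hC)]
  · intro C₁ h₁ C₂ h₂ h
    rw [← union_sdiff_cancel_left (hdisj C₁ h₁),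
      ← union_sdiff_cancel_left (hdisj C₂ h₂)]
    exact congrArg (· \ B) h

lemma sum_one_div_choose_card_filter_inter_eq {T B : Finset α} (hB : B ⊆ T) :
    ∑ A with A ∩ T = B, (1 : ℝ) / (Fintype.card α).choose #A
      = ((Fintype.card α : ℝ) + 1) / (#T + 1) / (#T).choose #B := by
  obtain ⟨d, hd⟩ : ∃ d, Fintype.card α = #T + d := ⟨#Tᶜ, (card_add_card_compl T).symm⟩
  have hTc : #Tᶜ = d := by rw [card_compl]; omega
  rw [sum_card_filter_inter_eq (fun m => (1 : ℝ) / (Fintype.card α).choose m) hB, hTc, hd]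
  simp only [nsmul_eq_mul, mul_one_div]
  rw [sum_choose_div_choose_add (card_le_card hB)]
  push_cast
  ring

lemma mul_sum_one_div_choose_card_filter_inter_eq_le (F : Finset (Finset α)) {T B : Finset α}
    (hB : B ⊆ T) :
    ((#T : ℝ) + 1) / (Fintype.card α + 1)
        * ∑ A ∈ F with A ∩ T = B, (1 : ℝ) / (Fintype.card α).choose #A
      ≤ 1 / (#T).choose #B := by
  have : ((#T).choose #B : ℝ) ≠ 0 := by exact_mod_cast (Nat.choose_pos (card_le_card hB)).ne'
  calc _ ≤ ((#T : ℝ) + 1) / (Fintype.card α + 1)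
          * ∑ A with A ∩ T = B, (1 : ℝ) / (Fintype.card α).choose #A := by
        gcongr
        exact subset_univ F
    _ = 1 / (#T).choose #B := by
        rw [sum_one_div_choose_card_filter_inter_eq hB]
        field_simp

end Trace

/-- If `F'` is the projection of `F ⊆ 2^[n]` onto `T ⊆ [n]`, then the Lubell mass of
`F'` in `2^T` is at least `(|T|+1)/(n+1)` times the Lubell mass of `F` in `2^[n]`. -/
theorem projection_lubell_ge (n t : ℕ) (F : Finset (Finset (Fin n))) (T : Finset (Fin n))
    (ht : T.card = t) :
    (∑ B ∈ F.image (fun A => A ∩ T), (1 : ℝ) / (t.choose B.card))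
      ≥ ((t : ℝ) + 1) / ((n : ℝ) + 1) * ∑ A ∈ F, (1 : ℝ) / (n.choose A.card) := by
  subst ht
  rw [ge_iff_le, ← sum_fiberwise_of_maps_to fun A hA => mem_image_of_mem (· ∩ T) hA, mul_sum]
  refine sum_le_sum fun B hB => ?_
  obtain ⟨A, -, rfl⟩ := mem_image.mp hB
  simpa using mul_sum_one_div_choose_card_filter_inter_eq_le F (inter_subset_right : A ∩ T ⊆ T)
end

section
/- For B ⊆ T ⊆ [n] with |T| = t and |B| = k, the family G_B = {A ⊆ [n] : A ∩ T = B} has Lubell mass ℓ(G_B) = (1/C(t,k))·((n+1)/(t+1)). -/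
/-!
Induct on the number of points outside `T`. For `x ∉ T`, the sets `A` with `A ∩ T = B` are
exactly those with `A ∩ (T ∪ {x})` equal to `B` or to `B ∪ {x}`, so the Lubell mass satisfies
`ℓ(T, B) = ℓ(T ∪ {x}, B) + ℓ(T ∪ {x}, B ∪ {x})`. The claimed value `(n + 1) / ((t + 1) C(t, k))`
obeys the same recurrence, which is the defining rule of Leibniz's harmonic triangle. When
`T` is everything, the class is `{B}`, with mass `1 / C(n, k)`.
-/

open Finset

theorem inv_mul_choose_add_inv_mul_choose_succ {K : Type*} [Field K] [CharZero K] {t k : ℕ}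
    (hkt : k ≤ t) :
    ((t + 2 : K) * (t + 1).choose k)⁻¹ + ((t + 2 : K) * (t + 1).choose (k + 1))⁻¹
      = ((t + 1 : K) * t.choose k)⁻¹ := by
  have h₁ : ((t + 1).choose k : K) * (t + 1 - k) = t.choose k * (t + 1) := by
    have := congrArg (Nat.cast (R := K)) (Nat.choose_mul_succ_eq t k)
    push_cast [Nat.cast_sub (by omega : k ≤ t + 1)] at this
    exact this.symm
  have h₂ : ((t + 1).choose (k + 1) : K) * (k + 1) = (t + 1) * t.choose k := by
    exact_mod_cast (Nat.add_one_mul_choose_eq t k).symm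
  have hc : (t.choose k : K) ≠ 0 := by exact_mod_cast (Nat.choose_pos hkt).ne'
  have ha : ((t + 1).choose k : K) ≠ 0 := by exact_mod_cast (Nat.choose_pos (by omega)).ne'
  have hb : ((t + 1).choose (k + 1) : K) ≠ 0 := by exact_mod_cast (Nat.choose_pos (by omega)).ne'
  have ht₂ : (t + 2 : K) ≠ 0 := by exact_mod_cast (t + 1).succ_ne_zero
  have ht₁ : (t + 1 : K) ≠ 0 := by exact_mod_cast t.succ_ne_zero
  field_simp
  linear_combination (-((t + 1).choose k : K)) * h₂ - ((t + 1).choose (k + 1) : K) * h₁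

namespace Finset

variable {α : Type*} [DecidableEq α] {A B T : Finset α} {x : α}

theorem inter_insert_eq_insert_iff (hxT : x ∉ T) (hxB : x ∉ B) :
    A ∩ insert x T = insert x B ↔ A ∩ T = B ∧ x ∈ A := by
  constructor
  · intro h
    have hxA : x ∈ A := (mem_inter.1 (h ▸ mem_insert_self x B)).1
    rw [inter_insert_of_mem hxA] at h
    refine ⟨?_, hxA⟩
    rw [← erase_insert (fun h ↦ hxT (mem_inter.1 h).2), h, erase_insert hxB]
  · rintro ⟨rfl, hxA⟩
    rw [inter_insert_of_mem hxA]

theorem inter_insert_eq_iff (hxB : x ∉ B) : A ∩ insert x T = B ↔ A ∩ T = B ∧ x ∉ A := by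
  constructor
  · intro h
    have hxA : x ∉ A := fun hxA ↦ hxB (h ▸ mem_inter.2 ⟨hxA, mem_insert_self x T⟩)
    rw [inter_insert_of_notMem hxA] at h
    exact ⟨h, hxA⟩
  · rintro ⟨rfl, hxA⟩
    rw [inter_insert_of_notMem hxA]

end Finset

section Lubell

variable {α : Type*} [Fintype α]

noncomputable def lubellMass (𝒜 : Finset (Finset α)) : ℝ :=
  ∑ A ∈ 𝒜, 1 / (Fintype.card α).choose #A

variable [DecidableEq α]

theorem lubellMass_filter_inter_eq_add {T B : Finset α} {x : α} (hxT : x ∉ T) (hxB : x ∉ B) :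
    lubellMass {A | A ∩ T = B}
      = lubellMass {A | A ∩ insert x T = B} + lubellMass {A | A ∩ insert x T = insert x B} := by
  simp only [lubellMass, inter_insert_eq_iff hxB, inter_insert_eq_insert_iff hxT hxB,
    ← filter_filter]
  exact (sum_filter_not_add_sum_filter _ _ _).symm

theorem lubellMass_filter_inter_eq {T B : Finset α} (hBT : B ⊆ T) :
    lubellMass {A | A ∩ T = B}
      = (Fintype.card α + 1) / ((#T + 1) * (#T).choose #B) := by
  induction hm : Fintype.card α - #T generalizing T B with
  | zero =>
    obtain rfl : T = univ := eq_univ_of_card T (by have := T.card_le_univ; omega)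
    have hclass : ({A | A ∩ univ = B} : Finset (Finset α)) = {B} := by ext; simp
    have hB : ((Fintype.card α).choose #B : ℝ) ≠ 0 := by
      exact_mod_cast (Nat.choose_pos (card_le_univ B)).ne'
    rw [hclass, card_univ]
    simp only [lubellMass, sum_singleton]
    field_simp
  | succ m ih =>
    obtain ⟨x, hxT⟩ : ∃ x, x ∉ T := by
      by_contra! h
      simp [eq_univ_of_forall h] at hm
    have hxB : x ∉ B := fun h ↦ hxT (hBT h)
    have hm' : Fintype.card α - #(insert x T) = m := by rw [card_insert_of_notMem hxT]; omega
    rw [lubellMass_filter_inter_eq_add hxT hxB, ih (hBT.trans (subset_insert x T)) hm',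
      ih (insert_subset_insert x hBT) hm', card_insert_of_notMem hxT, card_insert_of_notMem hxB]
    have hleibniz := inv_mul_choose_add_inv_mul_choose_succ (K := ℝ) (card_le_card hBT)
    push_cast
    simp only [div_eq_mul_inv, ← mul_add, add_assoc, one_add_one_eq_two, hleibniz]

end Lubell

/-- For `B ⊆ T ⊆ [n]` with `|T| = t` and `|B| = k`, the family
`G_B = {A ⊆ [n] : A ∩ T = B}` has Lubell mass `(1/C(t,k))·((n+1)/(t+1))`. -/
theorem lubell_of_trace_class (n t k : ℕ) (T B : Finset (Fin n))
    (hBT : B ⊆ T) (ht : T.card = t) (hk : B.card = k) :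
    (∑ A ∈ (Finset.univ : Finset (Finset (Fin n))).filter (fun A => A ∩ T = B),
        (1 : ℝ) / (n.choose A.card))
      = (1 / (t.choose k : ℝ)) * (((n : ℝ) + 1) / ((t : ℝ) + 1)) := by
  have := lubellMass_filter_inter_eq hBT
  simp only [lubellMass, Fintype.card_fin, ht, hk] at this
  rw [this, div_mul_div_comm, one_mul, mul_comm]
end

section
/- For each r ≥ 1 and each n ≥ r-1, the family F = {∅} ∪ {A ⊆ [n] : |A| > n-(r-1)} has Lubell mass exactly r but contains no R-system of private elements with |R| = r. -/
open Finset

/-- For `r ≥ 1` and `n ≥ r-1`, the family `F = {∅} ∪ {A ⊆ [n] : |A| > n-(r-1)}`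
has Lubell mass exactly `r`, yet contains no `R`-system of private elements with
`|R| = r`. -/
theorem private_system_sharpness (n r : ℕ) (hr : 1 ≤ r) (hn : r - 1 ≤ n) :
    (∑ A ∈ insert (∅ : Finset (Fin n))
        ((Finset.univ : Finset (Finset (Fin n))).filter (fun A => n - (r - 1) < A.card)),
        (1 : ℝ) / (n.choose A.card)) = r
    ∧ ¬ ∃ R : Finset (Fin n), R.card = r ∧ ∃ B : Fin n → Finset (Fin n),
        (∀ i ∈ R, B i ∈ insert (∅ : Finset (Fin n))
          ((Finset.univ : Finset (Finset (Fin n))).filter (fun A => n - (r - 1) < A.card)))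
        ∧ ∀ i ∈ R, ∀ j ∈ R, (i ∈ B j ↔ i = j) := by
  constructor
  · have hempty : (∅ : Finset (Fin n)) ∉
        (Finset.univ : Finset (Finset (Fin n))).filter (fun A => n - (r - 1) < A.card) := by
      simp
    rw [Finset.sum_insert hempty]
    have key : (Finset.univ : Finset (Finset (Fin n))).filter (fun A => n - (r - 1) < A.card)
        = (Ioc (n - (r-1)) n).biUnion (fun k => powersetCard k (univ : Finset (Fin n))) := by
      ext A
      simp only [mem_filter, mem_univ, true_and, mem_biUnion, Finset.mem_Ioc,
        mem_powersetCard, subset_univ]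
      constructor
      · intro h
        refine ⟨A.card, ⟨h, ?_⟩, rfl⟩
        simpa using Finset.card_le_univ A
      · rintro ⟨k, ⟨h1, _⟩, rfl⟩
        exact h1
    rw [key, Finset.sum_biUnion]
    · have hinner : ∀ k ∈ Ioc (n - (r-1)) n,
          (∑ A ∈ powersetCard k (univ : Finset (Fin n)), (1 : ℝ) / (n.choose A.card)) = 1 := by
        intro k hk
        rw [Finset.mem_Ioc] at hk
        have : ∀ A ∈ powersetCard k (univ : Finset (Fin n)),
            (1 : ℝ) / (n.choose A.card) = 1 / (n.choose k) := by
          intro A hA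
          rw [mem_powersetCard] at hA
          rw [hA.2]
        rw [Finset.sum_congr rfl this, Finset.sum_const, card_powersetCard, card_univ,
          Fintype.card_fin, nsmul_eq_mul]
        have hpos : 0 < n.choose k := Nat.choose_pos hk.2
        field_simp
      rw [Finset.sum_congr rfl hinner, Finset.sum_const, Nat.card_Ioc, nsmul_eq_mul, mul_one]
      have : n - (n - (r - 1)) = r - 1 := by omega
      rw [this]
      have : ((r - 1 : ℕ) : ℝ) = (r : ℝ) - 1 := by
        push_cast [hr]; ring
      rw [this]; simp
    · intro k hk l hl hkl
      simp only [Function.onFun]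
      apply Finset.disjoint_left.mpr
      intro A hA hA'
      rw [mem_powersetCard] at hA hA'
      exact hkl (hA.2 ▸ hA'.2 ▸ rfl)
  · rintro ⟨R, hR, B, hBF, hpriv⟩
    have hRne : R.Nonempty := by
      rw [← Finset.card_pos, hR]; exact hr
    obtain ⟨j, hj⟩ := hRne
    have hjBj : j ∈ B j := (hpriv j hj j hj).mpr rfl
    have hBj : B j ∈ insert (∅ : Finset (Fin n))
        ((Finset.univ : Finset (Finset (Fin n))).filter (fun A => n - (r - 1) < A.card)) :=
      hBF j hj
    rw [Finset.mem_insert] at hBj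
    rcases hBj with h | h
    · rw [h] at hjBj; exact absurd hjBj (Finset.notMem_empty j)
    · rw [mem_filter] at h
      have hcard : n - (r - 1) < (B j).card := h.2
      have hle : (B j).card ≤ n := by simpa using Finset.card_le_univ (B j)
      have hsub : R.erase j ⊆ (B j)ᶜ := by
        intro i hi
        rw [Finset.mem_erase] at hi
        rw [Finset.mem_compl]
        intro hiB
        exact hi.1 ((hpriv i hi.2 j hj).mp hiB)
      have hle2 : r - 1 ≤ n - (B j).card := by
        have := Finset.card_le_card hsub
        rw [Finset.card_erase_of_mem hj, hR, Finset.card_compl, Fintype.card_fin] at this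
        exact this
      omega
end

section
/- If A_1,...,A_r and B_1,...,B_r are subsets of [n] with B_j ⊆ A_i if and only if i ≠ j, then for every index i, |A_i| - |B_j| ≥ r-2 whenever j ≠ i. Consequently, the union of r-2 contiguous levels of 2^[n] contains no induced copy of the standard example S_r. -/
open Finset

/-- If `A_1,...,A_r` and `B_1,...,B_r` are subsets of `[n]` with `B_j ⊆ A_i` iff
`i ≠ j`, then `|A_i| ≥ |B_j| + (r-2)` whenever `j ≠ i`; consequently the union of
`r-2` contiguous levels of `2^[n]` contains no induced copy of the standard
example `S_r` (whose elements `a_1,...,a_r,b_1,...,b_r` satisfy `b_j < a_i` iff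
`i ≠ j`, with `{a_i}` and `{b_j}` antichains). -/
theorem standard_example_levels (n r : ℕ) (hr : 2 ≤ r) :
    (∀ A B : Fin r → Finset (Fin n), (∀ i j, B j ⊆ A i ↔ i ≠ j) →
      ∀ i j, j ≠ i → (B j).card + (r - 2) ≤ (A i).card)
    ∧ ∀ m : ℕ, ¬ ∃ A B : Fin r → Finset (Fin n),
        (∀ i, m ≤ (A i).card ∧ (A i).card < m + (r - 2)) ∧
        (∀ j, m ≤ (B j).card ∧ (B j).card < m + (r - 2)) ∧
        (∀ i j, i ≠ j → ¬ A i ⊆ A j) ∧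
        (∀ i j, i ≠ j → ¬ B i ⊆ B j) ∧
        (∀ i j, ¬ A i ⊆ B j) ∧
        (∀ i j, B j ⊆ A i ↔ i ≠ j) := by
  have main : ∀ A B : Fin r → Finset (Fin n), (∀ i j, B j ⊆ A i ↔ i ≠ j) →
      ∀ i j, j ≠ i → (B j).card + (r - 2) ≤ (A i).card := by
    intro A B h i j hij
    have hBA : B j ⊆ A i := (h i j).mpr (Ne.symm hij)
    have hx : ∀ k : Fin r, ∃ x, x ∈ B k ∧ x ∉ A k := by
      intro k
      have hns : ¬ B k ⊆ A k := fun hs => ((h k k).mp hs) rfl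
      exact Finset.not_subset.mp hns
    choose x hxB hxA using hx
    have hmaps : ∀ k ∈ (univ.erase j).erase i, x k ∈ A i \ B j := by
      intro k hk
      simp only [mem_erase, mem_univ] at hk
      obtain ⟨hki, hkj, -⟩ := hk
      rw [mem_sdiff]
      refine ⟨(h i k).mpr (Ne.symm hki) (hxB k), fun hmem => ?_⟩
      exact hxA k ((h k j).mpr hkj hmem)
    have hinj : ∀ k ∈ (univ.erase j).erase i, ∀ l ∈ (univ.erase j).erase i,
        x k = x l → k = l := by
      intro k _ l _ hxy
      by_contra hne
      have hmem : x l ∈ A k := (h k l).mpr hne (hxB l)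
      rw [← hxy] at hmem
      exact hxA k hmem
    have hcard := Finset.card_le_card_of_injOn x hmaps hinj
    have hS : ((univ.erase j).erase i).card = r - 2 := by
      rw [card_erase_of_mem (by simp [Ne.symm hij]), card_erase_of_mem (by simp),
        card_univ, Fintype.card_fin]
      omega
    have hsd := Finset.card_sdiff_add_card_eq_card hBA
    omega
  refine ⟨main, fun m ⟨A, B, hA, hB, _, _, _, hAB⟩ => ?_⟩
  have h01 : (⟨1, by omega⟩ : Fin r) ≠ ⟨0, by omega⟩ := by simp [Fin.ext_iff]
  have h1 := main A B hAB ⟨0, by omega⟩ ⟨1, by omega⟩ h01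
  have h2 := hA ⟨0, by omega⟩
  have h3 := hB ⟨1, by omega⟩
  omega
end

section
/- Let a_n = Σ_{k=0}^n 1/C(n,k). The sequence (a_n) satisfies a_0=1, a_1=2, a_2=5/2, a_3=a_4=8/3, a_5=13/5, and a_n is maximized (over all n ≥ 0) at n=3 and n=4 with maximum value 8/3. -/
open Finset

/-- `a_n = Σ_{k=0}^n 1/C(n,k)`, the Lubell mass of a maximal chain in `2^[n]`. -/
noncomputable def lubellChain (n : ℕ) : ℝ :=
  ∑ k ∈ Finset.range (n + 1), (1 : ℝ) / (n.choose k)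

lemma choose_mono_half {n a b : ℕ} (hab : a ≤ b) (hb : b ≤ n / 2) :
    n.choose a ≤ n.choose b := by
  induction b with
  | zero => simp [Nat.le_zero.mp hab]
  | succ b ih =>
    rcases Nat.lt_or_ge a (b+1) with h | h
    · exact le_trans (ih (Nat.lt_succ_iff.mp h) (by omega))
        (Nat.choose_le_succ_of_lt_half_left (by omega))
    · have : a = b + 1 := le_antisymm hab h
      simp [this]

lemma choose_two_le {n k : ℕ} (h2 : 2 ≤ k) (hk : k + 2 ≤ n) :
    n.choose 2 ≤ n.choose k := by
  rcases le_or_gt k (n / 2) with h | h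
  · exact choose_mono_half h2 h
  · have hkn : k ≤ n := by omega
    rw [← Nat.choose_symm hkn]
    exact choose_mono_half (by omega) (by omega)

lemma lubellChain_le {n : ℕ} (hn : 4 ≤ n) : lubellChain n ≤ 8 / 3 := by
  have h1n : 1 ≤ n := by omega
  set T : Finset ℕ := {0, 1, n-1, n} with hTdef
  have hT : T ⊆ Finset.range (n+1) := by
    intro k hk
    simp only [hTdef, Finset.mem_insert, Finset.mem_singleton] at hk
    rw [Finset.mem_range]; omega
  have hcardT : T.card = 4 := by
    rw [hTdef]
    rw [Finset.card_insert_of_notMem (by simp; omega),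
        Finset.card_insert_of_notMem (by simp; omega),
        Finset.card_insert_of_notMem (by simp; omega),
        Finset.card_singleton]
  have hsplit : lubellChain n
      = ∑ k ∈ Finset.range (n+1) \ T, (1 : ℝ) / (n.choose k) + ∑ k ∈ T, (1 : ℝ) / (n.choose k) := by
    rw [lubellChain, ← Finset.sum_sdiff hT]
  have hnR : (0:ℝ) < n := by positivity
  have hsumT : ∑ k ∈ T, (1 : ℝ) / (n.choose k) = 2 + 2 / n := by
    have hsymm : n.choose (n-1) = n := by
      have := Nat.choose_symm (n := n) (k := 1) h1n
      simpa using this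
    rw [hTdef]
    rw [Finset.sum_insert (by simp; omega), Finset.sum_insert (by simp; omega),
        Finset.sum_insert (by simp; omega), Finset.sum_singleton]
    simp [hsymm, Nat.choose_one_right]
    field_simp
    ring
  have hchoose2 : ((n.choose 2 : ℕ) : ℝ) = n * (n - 1) / 2 := by
    rw [Nat.cast_choose_two]
  have hn1R : (0:ℝ) < (n:ℝ) - 1 := by
    have : (4:ℝ) ≤ n := by exact_mod_cast hn
    linarith
  have hbound : ∀ k ∈ Finset.range (n+1) \ T, (1 : ℝ) / (n.choose k) ≤ 2 / (n * (n-1)) := by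
    intro k hk
    rw [Finset.mem_sdiff, Finset.mem_range] at hk
    obtain ⟨hk1, hk2⟩ := hk
    simp only [hTdef, Finset.mem_insert, Finset.mem_singleton] at hk2
    push_neg at hk2
    have h2k : 2 ≤ k := by omega
    have hk2n : k + 2 ≤ n := by omega
    have hle := choose_two_le h2k hk2n
    have hpos : (0:ℝ) < (n.choose 2 : ℕ) := by rw [hchoose2]; positivity
    have hposk : (0:ℝ) < (n.choose k : ℕ) := by
      exact_mod_cast Nat.choose_pos (by omega : k ≤ n)
    calc (1 : ℝ) / (n.choose k) ≤ 1 / (n.choose 2 : ℕ) := by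
          apply one_div_le_one_div_of_le hpos
          exact_mod_cast hle
      _ = 2 / (n * (n-1)) := by rw [hchoose2]; field_simp
  have hcard : (Finset.range (n+1) \ T).card = n - 3 := by
    rw [Finset.card_sdiff_of_subset hT, Finset.card_range, hcardT]
    omega
  have hsumM : ∑ k ∈ Finset.range (n+1) \ T, (1 : ℝ) / (n.choose k)
      ≤ ((n:ℝ) - 3) * (2 / (n * (n-1))) := by
    calc ∑ k ∈ Finset.range (n+1) \ T, (1 : ℝ) / (n.choose k)
        ≤ (Finset.range (n+1) \ T).card • (2 / ((n:ℝ) * (n-1))) :=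
          Finset.sum_le_card_nsmul _ _ _ hbound
      _ = ((n:ℝ) - 3) * (2 / (n * (n-1))) := by
          rw [hcard, nsmul_eq_mul, Nat.cast_sub (by omega : 3 ≤ n)]
          norm_num
  have hnR4 : (4:ℝ) ≤ n := by exact_mod_cast hn
  rw [hsplit, hsumT]
  have : ((n:ℝ) - 3) * (2 / (n * (n-1))) + (2 + 2 / n) ≤ 8 / 3 := by
    have e : ((n:ℝ) - 3) * (2 / (n * (n-1))) + (2 + 2 / n)
        = (2*(n:ℝ)^2 + 2*n - 8) / (n * (n-1)) := by
      field_simp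
      ring
    rw [e, div_le_div_iff₀ (by positivity) (by norm_num)]
    nlinarith [hnR4]
  linarith [hsumM]

/-- Initial values of `a_n` and the fact that the sequence is maximized at
`n = 3` and `n = 4` with maximum value `8/3`. -/
theorem lubellChain_values :
    lubellChain 0 = 1 ∧ lubellChain 1 = 2 ∧ lubellChain 2 = 5 / 2 ∧
    lubellChain 3 = 8 / 3 ∧ lubellChain 4 = 8 / 3 ∧ lubellChain 5 = 13 / 5 ∧
    ∀ n : ℕ, lubellChain n ≤ 8 / 3 := by
  have h0 : lubellChain 0 = 1 := by norm_num [lubellChain, Finset.sum_range_succ]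
  have h1 : lubellChain 1 = 2 := by norm_num [lubellChain, Finset.sum_range_succ]
  have h2 : lubellChain 2 = 5 / 2 := by norm_num [lubellChain, Finset.sum_range_succ]
  have h3 : lubellChain 3 = 8 / 3 := by norm_num [lubellChain, Finset.sum_range_succ]
  have h4 : lubellChain 4 = 8 / 3 := by norm_num [lubellChain, Finset.sum_range_succ, Nat.choose]
  have h5 : lubellChain 5 = 13 / 5 := by norm_num [lubellChain, Finset.sum_range_succ, Nat.choose]
  refine ⟨h0, h1, h2, h3, h4, h5, fun n => ?_⟩
  match n with
  | 0 => rw [h0]; norm_num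
  | 1 => rw [h1]; norm_num
  | 2 => rw [h2]; norm_num
  | 3 => rw [h3]
  | (m+4) => exact lubellChain_le (by omega)
end

section
/- For A ⊆ [n] with |A| = k and 2 ≤ k ≤ n-2, the identity C(k,2)/C(n-2,k-2) + k(n-k)/C(n-2,k-1) + C(n-k,2)/C(n-2,k) = 4·C(n,2)/C(n,k) holds. -/
/-!
Multiplying through by `C(n,k)`, the three terms become `C(n,2)`, `2 C(n,2)` and `C(n,2)`:
choosing a `k`-set and then a pair inside it (resp. a pair straddling it, resp. a pair outside it)
is the same as choosing the pair first and then completing the `k`-set from the remaining `n - 2`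
points.
-/

namespace Nat

variable {K : Type*} [Field K] [CharZero K]

theorem cast_choose_div_choose_sub {n k s : ℕ} (hsk : s ≤ k) (hkn : k ≤ n) :
    (k.choose s : K) / (n - s).choose (k - s) = n.choose s / n.choose k := by
  rw [div_eq_div_iff (cast_ne_zero.mpr (choose_pos (by omega)).ne')
    (cast_ne_zero.mpr (choose_pos hkn).ne')]
  exact_mod_cast (Nat.mul_comm _ _).trans (choose_mul hsk)

theorem choose_succ_mul_mul_sub (m j : ℕ) :
    (m + 2).choose (j + 1) * ((j + 1) * (m + 1 - j)) = (m + 2) * (m + 1) * m.choose j := by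
  calc (m + 2).choose (j + 1) * ((j + 1) * (m + 1 - j))
      = (m + 2) * ((m + 1).choose j * (m + 1 - j)) := by
        rw [← Nat.mul_assoc, ← add_one_mul_choose_eq]; ring
    _ = (m + 2) * (m + 1) * m.choose j := by rw [← choose_mul_succ_eq]; ring

theorem cast_mul_sub_div_choose {n k : ℕ} (hk : 1 ≤ k) (hkn : k + 1 ≤ n) :
    (k * (n - k) : K) / (n - 2).choose (k - 1) = 2 * n.choose 2 / n.choose k := by
  obtain ⟨m, rfl⟩ : ∃ m, n = m + 2 := ⟨n - 2, by omega⟩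
  obtain ⟨j, rfl⟩ : ∃ j, k = j + 1 := ⟨k - 1, by omega⟩
  have key := congrArg (Nat.cast (R := K)) (choose_succ_mul_mul_sub m j)
  push_cast [Nat.cast_sub (show j ≤ m + 1 by omega)] at key
  simp only [Nat.add_sub_cancel, cast_choose_two]
  rw [div_eq_div_iff (cast_ne_zero.mpr (choose_pos (by omega)).ne')
    (cast_ne_zero.mpr (choose_pos (by omega)).ne')]
  push_cast
  linear_combination key

end Nat

/-- For `2 ≤ k ≤ n-2`:
`C(k,2)/C(n-2,k-2) + k(n-k)/C(n-2,k-1) + C(n-k,2)/C(n-2,k) = 4·C(n,2)/C(n,k)`. -/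
theorem quadrant_contribution_identity (n k : ℕ) (h2 : 2 ≤ k) (hk : k ≤ n - 2) :
    ((k.choose 2 : ℝ)) / ((n - 2).choose (k - 2))
      + ((k : ℝ) * (n - k)) / ((n - 2).choose (k - 1))
      + (((n - k).choose 2 : ℝ)) / ((n - 2).choose k)
    = 4 * (n.choose 2 : ℝ) / (n.choose k) := by
  have hkn : k ≤ n := by omega
  have inside := Nat.cast_choose_div_choose_sub (K := ℝ) h2 hkn
  have outside := Nat.cast_choose_div_choose_sub (K := ℝ) (n := n) (k := n - k) (s := 2)
    (by omega) (Nat.sub_le n k)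
  rw [Nat.choose_symm hkn, Nat.choose_symm_of_eq_add (show n - 2 = n - k - 2 + k by omega)]
    at outside
  rw [inside, Nat.cast_mul_sub_div_choose (by omega) (by omega), outside]
  ring
end
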